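/- arXiv:1001.0053 — 7 statements merged into one kernel-verified Lean document; each statement's English description precedes it below -/
import Mathlib

section
/- Let (X,d) be a metric space and {x_n}_{n≥0} a sequence in X with a positive finite rate of escape R (i.e. d(x_0,x_n)/n → R ∈ (0,∞)) satisfying d(x_{m+k}, x_{n+k}) ≤ d(x_m, x_n) for all k,m,n ≥ 0. Then the sequence is aligned: for every ε > 0 there exists K ∈ ℕ such that for infinitely many n ∈ ℕ, one has e^{-ε} d(x_0,x_k) + d(x_k,x_n) ≤ d(x_0,x_n) for all K ≤ k ≤ n. -/
/-!
Fix `c` with `R < c < e^ε R`. Eventually `d(x₀, x_k) ≤ c k`, while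
`d(x₀, x_n) - e^{-ε} c n → ∞` because `e^{-ε} c < R`, so this sequence has infinitely many
record times `n`. The displacement condition gives `d(x_k, x_n) ≤ d(x₀, x_{n-k})`, and at a record
time `n` the latter is at most `d(x₀, x_n) - e^{-ε} c k`; adding `e^{-ε} d(x₀, x_k) ≤ e^{-ε} c k`
gives the cone inequality.
-/

open Filter

/-- A sequence is aligned: for each `ε > 0` there is `K` such that for infinitely many `n`,
`x k` lies in the ε-cone `[x 0, x n]_ε` for all `K ≤ k ≤ n`. -/
def Aligned {X : Type*} [MetricSpace X] (x : ℕ → X) : Prop :=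
  ∀ ε > (0 : ℝ), ∃ K : ℕ, ∀ N : ℕ, ∃ n ≥ N,
    ∀ k : ℕ, K ≤ k → k ≤ n →
      Real.exp (-ε) * dist (x 0) (x k) + dist (x k) (x n) ≤ dist (x 0) (x n)

open Topology

theorem eventually_le_mul_of_tendsto_div {a : ℕ → ℝ} {R c : ℝ}
    (ha : Tendsto (fun n : ℕ => a n / n) atTop (𝓝 R)) (hc : R < c) :
    ∀ᶠ n : ℕ in atTop, a n ≤ c * n := by
  filter_upwards [ha.eventually (gt_mem_nhds hc), eventually_gt_atTop 0] with n hn hn0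
  rw [div_lt_iff₀ (Nat.cast_pos.mpr hn0)] at hn
  exact hn.le

theorem tendsto_sub_mul_atTop_of_tendsto_div {a : ℕ → ℝ} {R c : ℝ}
    (ha : Tendsto (fun n : ℕ => a n / n) atTop (𝓝 R)) (hc : c < R) :
    Tendsto (fun n : ℕ => a n - c * n) atTop atTop := by
  have hprod : Tendsto (fun n : ℕ => (n : ℝ) * (a n / n - c)) atTop atTop :=
    tendsto_natCast_atTop_atTop.atTop_mul_pos (sub_pos.mpr hc) (ha.sub_const c)
  refine hprod.congr' ?_
  filter_upwards [eventually_gt_atTop 0] with n hn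
  field_simp [(Nat.cast_pos.mpr hn).ne']

section Displacement

variable {X : Type*} [MetricSpace X] {x : ℕ → X}

theorem dist_le_dist_zero_sub
    (hsemi : ∀ k m n : ℕ, dist (x (m + k)) (x (n + k)) ≤ dist (x m) (x n))
    {k n : ℕ} (hkn : k ≤ n) :
    dist (x k) (x n) ≤ dist (x 0) (x (n - k)) := by
  simpa [Nat.sub_add_cancel hkn] using hsemi k 0 (n - k)

theorem cone_inequality_of_high_score
    (hsemi : ∀ k m n : ℕ, dist (x (m + k)) (x (n + k)) ≤ dist (x m) (x n))
    {E c : ℝ} (hE : 0 ≤ E) {K n : ℕ} (hK : ∀ k ≥ K, dist (x 0) (x k) ≤ c * k)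
    (hn : ∀ m < n, dist (x 0) (x m) - E * c * m < dist (x 0) (x n) - E * c * n)
    {k : ℕ} (hKk : K ≤ k) (hkn : k ≤ n) :
    E * dist (x 0) (x k) + dist (x k) (x n) ≤ dist (x 0) (x n) := by
  have hrecord : dist (x 0) (x (n - k)) - E * c * (n - k : ℕ)
      ≤ dist (x 0) (x n) - E * c * n := by
    rcases (Nat.sub_le n k).lt_or_eq with hlt | heq
    · exact (hn _ hlt).le
    · rw [heq]
  rw [Nat.cast_sub hkn] at hrecord
  calc E * dist (x 0) (x k) + dist (x k) (x n)
      ≤ E * (c * k) + dist (x 0) (x (n - k)) :=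
        add_le_add (mul_le_mul_of_nonneg_left (hK k hKk) hE) (dist_le_dist_zero_sub hsemi hkn)
    _ ≤ dist (x 0) (x n) := by linarith

end Displacement

theorem stmt0 {X : Type*} [MetricSpace X] (x : ℕ → X) (R : ℝ)
    (hR : 0 < R)
    (hrate : Tendsto (fun n : ℕ => dist (x 0) (x n) / n) atTop (nhds R))
    (hsemi : ∀ k m n : ℕ, dist (x (m + k)) (x (n + k)) ≤ dist (x m) (x n)) :
    Aligned x := by
  intro ε hε
  set E := Real.exp (-ε)
  have hE : 0 < E := Real.exp_pos _
  have hRE : R < R / E := (lt_div_iff₀ hE).mpr <|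
    mul_lt_of_lt_one_right hR (Real.exp_lt_one_iff.mpr (neg_lt_zero.mpr hε))
  obtain ⟨c, hRc, hcRE⟩ := exists_between hRE
  obtain ⟨K, hK⟩ := eventually_atTop.mp (eventually_le_mul_of_tendsto_div hrate hRc)
  have hEc : E * c < R := by rwa [lt_div_iff₀ hE, mul_comm] at hcRE
  refine ⟨K, fun N => ?_⟩
  obtain ⟨n, hnN, hn⟩ := high_scores (tendsto_sub_mul_atTop_of_tendsto_div hrate hEc) N
  exact ⟨n, hnN, fun k hKk hkn => cone_inequality_of_high_score hsemi hE.le hK hn hKk hkn⟩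
end

section
/- Let X be a metric space satisfying the semi-parallelogram law (e.g. a Hilbert space or CAT(0) space): for all x,y,z there is a midpoint m of x and y with d(x,y)^2 + 4 d(m,z)^2 ≤ 2 d(x,z)^2 + 2 d(z,y)^2. Let x,y,z ∈ X with z in the ε-cone [x,y]_ε for some ε > 0, and let w be the point on the geodesic segment from x to y (extended as a geodesic ray if necessary) at distance d(x,z) from x. Then d(z,w)^2 ≤ 4(1 - e^{-2ε}) d(x,z)^2. -/
/-!
Write `f t = d(z, γ t)`, `r = d(x, z)` and `u = e^{-ε}`. Applying the semi-parallelogram law to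
`x`, `γ (2t)` and `c = γ t` forces the midpoint to be `γ t`; applying it again with `c = z` gives
`f t ^ 2 ≤ r ^ 2 / 2 + f (2t) ^ 2 / 2 - t ^ 2`. The quadratic `q t = t ^ 2 - 2 u r t + r ^ 2` turns
this into an equality, and for `t ≥ d(x, y)` the cone condition and the triangle inequality
give `f t ^ 2 ≤ q t`. Halving `t` repeatedly brings this bound down to `t = r`, where
`q r = 2 (1 - u) r ^ 2 ≤ 4 (1 - u ^ 2) r ^ 2` because the cone condition forces `u r ≤ r`.
-/

open Real

def SemiParallelogramLaw (X : Type*) [MetricSpace X] : Prop :=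
  ∀ a b : X, ∃ m : X, dist a m = dist a b / 2 ∧ dist m b = dist a b / 2 ∧
    ∀ c : X, dist a b ^ 2 + 4 * dist m c ^ 2 ≤ 2 * dist a c ^ 2 + 2 * dist c b ^ 2

section

variable {X : Type*} [MetricSpace X]

/-- The law applied with `c = p` shows that `p` is the midpoint it provides. -/
theorem SemiParallelogramLaw.le_of_dist_eq_half (h : SemiParallelogramLaw X) {a b p : X}
    (hap : dist a p = dist a b / 2) (hpb : dist p b = dist a b / 2) (c : X) :
    dist a b ^ 2 + 4 * dist p c ^ 2 ≤ 2 * dist a c ^ 2 + 2 * dist c b ^ 2 := by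
  obtain ⟨m, -, -, hm⟩ := h a b
  have hmp : dist m p = 0 := by
    have := hm p
    rw [hap, hpb] at this
    nlinarith [dist_nonneg (x := m) (y := p)]
  rw [← dist_eq_zero.mp hmp]
  exact hm c

section GeodesicRay

variable {γ : ℝ → X} (hγ : ∀ s t : ℝ, 0 ≤ s → 0 ≤ t → dist (γ s) (γ t) = |s - t|)
include hγ

theorem dist_ray_eq_sub {s t : ℝ} (hs : 0 ≤ s) (hst : s ≤ t) : dist (γ s) (γ t) = t - s := by
  rw [hγ s t hs (hs.trans hst), abs_of_nonpos (by linarith)]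
  ring

theorem sq_dist_ray_le_of_double (hpar : SemiParallelogramLaw X) (z : X) {t : ℝ} (ht : 0 ≤ t) :
    dist z (γ t) ^ 2 ≤ dist (γ 0) z ^ 2 / 2 + dist z (γ (2 * t)) ^ 2 / 2 - t ^ 2 := by
  have h0t := dist_ray_eq_sub hγ le_rfl ht
  have h02t := dist_ray_eq_sub hγ le_rfl (by linarith : 0 ≤ 2 * t)
  have ht2t := dist_ray_eq_sub hγ ht (by linarith : t ≤ 2 * t)
  have := hpar.le_of_dist_eq_half (a := γ 0) (b := γ (2 * t))
    (by rw [h0t, h02t]; ring) (by rw [ht2t, h02t]; ring) z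
  rw [h02t, dist_comm (γ t) z] at this
  linarith

/-- The bound is a fixed point of `sq_dist_ray_le_of_double`; it holds for `t ≥ L` by the
triangle inequality and propagates to smaller `t` by halving. -/
theorem sq_dist_ray_le_of_cone (hpar : SemiParallelogramLaw X) {z : X} {L κ : ℝ} (hL : 0 ≤ L)
    (hκ : 0 ≤ κ) (hcone : κ * dist (γ 0) z + dist z (γ L) ≤ L) {t : ℝ} (ht : 0 ≤ t) :
    dist z (γ t) ^ 2 ≤ t ^ 2 - 2 * κ * dist (γ 0) z * t + dist (γ 0) z ^ 2 := by
  set r := dist (γ 0) z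
  have hr : 0 ≤ r := dist_nonneg
  have hκr : κ * r ≤ r := by
    have := dist_triangle (γ 0) z (γ L)
    rw [dist_ray_eq_sub hγ le_rfl hL] at this
    linarith
  have hfar : ∀ k : ℕ, ∀ t : ℝ, 0 ≤ t → L ≤ 2 ^ k * t →
      dist z (γ t) ^ 2 ≤ t ^ 2 - 2 * κ * r * t + r ^ 2 := by
    intro k
    induction k with
    | zero =>
      intro t ht hLt
      rw [pow_zero, one_mul] at hLt
      have hzt : dist z (γ t) ≤ t - κ * r := by
        have := dist_triangle z (γ L) (γ t)
        rw [dist_ray_eq_sub hγ hL hLt] at this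
        linarith
      have hκr0 : 0 ≤ κ * r := mul_nonneg hκ hr
      nlinarith [dist_nonneg (x := z) (y := γ t)]
    | succ k ih =>
      intro t ht hLt
      have h2t := ih (2 * t) (by linarith) (by rw [pow_succ] at hLt; linarith)
      have := sq_dist_ray_le_of_double hγ hpar z ht
      linarith
  rcases ht.eq_or_lt with rfl | ht
  · simp [r, dist_comm]
  obtain ⟨k, hk⟩ := pow_unbounded_of_one_lt (L / t) one_lt_two
  exact hfar k t ht.le (by rw [div_lt_iff₀ ht] at hk; linarith)

end GeodesicRay

end

theorem stmt1_general {X : Type*} [MetricSpace X]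
    (hmid : ∀ a b : X, ∃ m : X, dist a m = dist a b / 2 ∧ dist m b = dist a b / 2 ∧
      ∀ c : X, dist a b ^ 2 + 4 * dist m c ^ 2 ≤ 2 * dist a c ^ 2 + 2 * dist c b ^ 2)
    (x y z : X) (ε : ℝ)
    (hz : Real.exp (-ε) * dist x z + dist z y ≤ dist x y)
    (γ : ℝ → X)
    (hγ : ∀ s t : ℝ, 0 ≤ s → 0 ≤ t → dist (γ s) (γ t) = |s - t|)
    (hγ0 : γ 0 = x) (hγy : γ (dist x y) = y) :
    dist z (γ (dist x z)) ^ 2 ≤ 4 * (1 - Real.exp (-2 * ε)) * dist x z ^ 2 := by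
  set u := exp (-ε)
  set r := dist x z
  have hexp : exp (-2 * ε) = u ^ 2 := by rw [sq, ← exp_add]; ring_nf
  have hu : 0 < u := exp_pos _
  have hr : 0 ≤ r := dist_nonneg
  have hur : u * r ≤ r := by linarith [dist_triangle x z y]
  have hbound := sq_dist_ray_le_of_cone hγ hmid dist_nonneg hu.le (by rwa [hγ0, hγy]) hr
  rw [hγ0] at hbound
  rw [hexp]
  nlinarith [mul_nonneg (sub_nonneg.mpr hur) (mul_nonneg (by linarith : 0 ≤ 1 + 2 * u) hr)]

/-- ε-cone approximation lemma in a metric space satisfying the semi-parallelogram law,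
with convexity of the distance to a point along the geodesic through `x` and `y`. -/
theorem stmt1 {X : Type*} [MetricSpace X]
    (hmid : ∀ a b : X, ∃ m : X, dist a m = dist a b / 2 ∧ dist m b = dist a b / 2 ∧
      ∀ c : X, dist a b ^ 2 + 4 * dist m c ^ 2 ≤ 2 * dist a c ^ 2 + 2 * dist c b ^ 2)
    (x y z : X) (ε : ℝ) (hε : 0 < ε)
    (hz : Real.exp (-ε) * dist x z + dist z y ≤ dist x y)
    (γ : ℝ → X)
    (hγ : ∀ s t : ℝ, 0 ≤ s → 0 ≤ t → dist (γ s) (γ t) = |s - t|)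
    (hγ0 : γ 0 = x) (hγy : γ (dist x y) = y)
    (hconv : ∀ p : X, ConvexOn ℝ (Set.Ici (0 : ℝ)) (fun t => dist p (γ t))) :
    dist z (γ (dist x z)) ^ 2 ≤ 4 * (1 - Real.exp (-2 * ε)) * dist x z ^ 2 :=
  stmt1_general hmid x y z ε hz γ hγ hγ0 hγy
end

section
/- Let x, y, z be points in a real inner product space with z ∈ [x,y]_ε, meaning e^{-ε}‖z - x‖ + ‖y - z‖ ≤ ‖y - x‖, where ε > 0 and x ≠ y. Let w = x + ‖z - x‖ · (y - x)/‖y - x‖. Then ‖z - w‖^2 ≤ 4(1 - e^{-2ε}) ‖z - x‖^2. -/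
/-!
Put `p = z - x`, `v = y - x` and `a = e^{-ε}`. Squaring `‖v - p‖ ≤ ‖v‖ - a‖p‖` and expanding
`‖v - p‖²` gives the lower bound `‖p‖²(1 - a²) + 2a‖p‖‖v‖ ≤ 2⟪p, v⟫`, while
`‖p - (‖p‖/‖v‖) v‖² = 2‖p‖² - 2(‖p‖/‖v‖)⟪p, v⟫` exactly. Together they bound the square of the
distance to `w` by `2(1 - a)‖p‖²`, which is at most `4(1 - a²)‖p‖²`.
-/

open RealInnerProductSpace

section ConeApproximation

variable {E : Type*} [NormedAddCommGroup E] [InnerProductSpace ℝ E]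

theorem le_two_inner_of_mul_norm_add_norm_sub_le {p v : E} {a : ℝ}
    (h : a * ‖p‖ + ‖v - p‖ ≤ ‖v‖) :
    ‖p‖ ^ 2 * (1 - a ^ 2) + 2 * a * ‖p‖ * ‖v‖ ≤ 2 * ⟪p, v⟫ := by
  have hsq : ‖v - p‖ ^ 2 ≤ (‖v‖ - a * ‖p‖) ^ 2 :=
    pow_le_pow_left₀ (norm_nonneg _) (by linarith) 2
  rw [norm_sub_sq_real, real_inner_comm] at hsq
  nlinarith

theorem norm_sub_div_norm_smul_sq {p v : E} (hv : v ≠ 0) :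
    ‖p - (‖p‖ / ‖v‖) • v‖ ^ 2 = 2 * ‖p‖ ^ 2 - 2 * (‖p‖ / ‖v‖) * ⟪p, v⟫ := by
  have hv' : ‖v‖ ≠ 0 := norm_ne_zero_iff.mpr hv
  rw [norm_sub_sq_real, real_inner_smul_right, norm_smul, Real.norm_eq_abs,
    abs_of_nonneg (by positivity)]
  field_simp
  ring

theorem norm_sub_div_norm_smul_sq_le {p v : E} {a : ℝ} (ha : 0 ≤ a)
    (h : a * ‖p‖ + ‖v - p‖ ≤ ‖v‖) :
    ‖p - (‖p‖ / ‖v‖) • v‖ ^ 2 ≤ 4 * (1 - a ^ 2) * ‖p‖ ^ 2 := by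
  rcases eq_or_ne v 0 with rfl | hv
  · have hp : p = 0 := by
      rw [zero_sub, norm_neg, norm_zero] at h
      exact norm_le_zero_iff.mp (by nlinarith [norm_nonneg p])
    simp [hp]
  have hinner := le_two_inner_of_mul_norm_add_norm_sub_le h
  -- the triangle inequality forces `a ≤ 1` unless `p = 0`
  have hap : 0 ≤ (1 - a) * ‖p‖ := by
    nlinarith [norm_le_norm_add_norm_sub' v p]
  set t := ‖p‖ / ‖v‖
  have ht : 0 ≤ t := by positivity
  have htv : t * ‖v‖ = ‖p‖ := div_mul_cancel₀ _ (norm_ne_zero_iff.mpr hv)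
  have hdist : ‖p - t • v‖ ^ 2 ≤ 2 * (1 - a) * ‖p‖ ^ 2 - t * ‖p‖ ^ 2 * (1 - a ^ 2) := by
    rw [norm_sub_div_norm_smul_sq hv]
    linear_combination mul_le_mul_of_nonneg_left hinner ht - 2 * a * ‖p‖ * htv
  linarith [mul_nonneg (mul_nonneg ht (norm_nonneg p)) (mul_nonneg hap (by linarith : 0 ≤ 1 + a)),
    mul_nonneg (mul_nonneg (norm_nonneg p) hap) (by linarith : (0 : ℝ) ≤ 2 + 4 * a)]

end ConeApproximation

theorem stmt2_general {E : Type*} [NormedAddCommGroup E] [InnerProductSpace ℝ E]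
    (x y z : E) (ε : ℝ)
    (hz : Real.exp (-ε) * ‖z - x‖ + ‖y - z‖ ≤ ‖y - x‖) :
    ‖z - (x + (‖z - x‖ / ‖y - x‖) • (y - x))‖ ^ 2
      ≤ 4 * (1 - Real.exp (-2 * ε)) * ‖z - x‖ ^ 2 := by
  have hexp : Real.exp (-2 * ε) = Real.exp (-ε) ^ 2 := by
    rw [← Real.exp_nat_mul]
    ring_nf
  rw [← sub_sub_sub_cancel_right y z x] at hz
  rw [hexp, ← sub_sub]
  exact norm_sub_div_norm_smul_sq_le (Real.exp_pos _).le hz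

/-- ε-cone approximation lemma in a real inner product space. -/
theorem stmt2 {E : Type*} [NormedAddCommGroup E] [InnerProductSpace ℝ E]
    (x y z : E) (ε : ℝ) (hε : 0 < ε) (hxy : x ≠ y)
    (hz : Real.exp (-ε) * ‖z - x‖ + ‖y - z‖ ≤ ‖y - x‖) :
    ‖z - (x + (‖z - x‖ / ‖y - x‖) • (y - x))‖ ^ 2
      ≤ 4 * (1 - Real.exp (-2 * ε)) * ‖z - x‖ ^ 2 :=
  stmt2_general x y z ε hz
end

section
/- Let (X,d) be a metric space and {x_n}_{n≥0} ⊂ X a sequence with rate of escape R > 0 (i.e. d(x_0,x_n)/n → R). Then {x_n} is aligned if and only if L ≥ R, where L = lim_{K→∞} limsup_{n→∞} min_{K ≤ k ≤ n} (d(x_0,x_n) - d(x_n,x_k))/k. -/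
open Filter

/-- `L = lim_{K→∞} limsup_{n→∞} min_{K ≤ k ≤ n} (d(x_0,x_n) - d(x_n,x_k))/k`; the inner
expression is nondecreasing in `K` so the limit is the supremum over `K`. -/
noncomputable def Lval {X : Type*} [MetricSpace X] (x : ℕ → X) : EReal :=
  ⨆ K : ℕ, Filter.limsup
    (fun n : ℕ => ((sInf {r : ℝ | ∃ k : ℕ, K ≤ k ∧ k ≤ n ∧
      r = (dist (x 0) (x n) - dist (x n) (x k)) / k} : ℝ) : EReal)) atTop

private lemma set_eq_image {X : Type*} [MetricSpace X] (x : ℕ → X) (K n : ℕ) :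
    {r : ℝ | ∃ k : ℕ, K ≤ k ∧ k ≤ n ∧
      r = (dist (x 0) (x n) - dist (x n) (x k)) / k} =
    (fun k : ℕ => (dist (x 0) (x n) - dist (x n) (x k)) / k) '' (Set.Icc K n) := by
  ext r
  simp only [Set.mem_setOf_eq, Set.mem_image, Set.mem_Icc]
  constructor
  · rintro ⟨k, h1, h2, rfl⟩; exact ⟨k, ⟨h1, h2⟩, rfl⟩
  · rintro ⟨k, ⟨h1, h2⟩, rfl⟩; exact ⟨k, h1, h2, rfl⟩

private lemma bddBelow_set {X : Type*} [MetricSpace X] (x : ℕ → X) (K n : ℕ) :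
    BddBelow {r : ℝ | ∃ k : ℕ, K ≤ k ∧ k ≤ n ∧
      r = (dist (x 0) (x n) - dist (x n) (x k)) / k} := by
  rw [set_eq_image]
  exact ((Set.finite_Icc K n).image _).bddBelow

private lemma aux_forward {X : Type*} [MetricSpace X] (x : ℕ → X) (R c : ℝ)
    (hrate : Tendsto (fun n : ℕ => dist (x 0) (x n) / n) atTop (nhds R))
    (h0 : 0 < c) (hcR : c < R) (hA : Aligned x) : (c : EReal) ≤ Lval x := by
  set m := (R + c) / 2 with hm
  have hm1 : c < m := by rw [hm]; linarith
  have hm2 : m < R := by rw [hm]; linarith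
  have hm0 : 0 < m := by linarith
  have hε : 0 < Real.log (m / c) := Real.log_pos (by rw [lt_div_iff₀ h0]; linarith)
  have hexp : Real.exp (-Real.log (m / c)) = c / m := by
    rw [Real.exp_neg, Real.exp_log (by positivity), inv_div]
  obtain ⟨K, hK⟩ := hA (Real.log (m / c)) hε
  obtain ⟨K₂, hK₂⟩ := eventually_atTop.mp (hrate.eventually_const_le hm2)
  set K' := max (max K K₂) 1 with hK'
  refine le_trans ?_ (le_iSup (fun K : ℕ => Filter.limsup
    (fun n : ℕ => ((sInf {r : ℝ | ∃ k : ℕ, K ≤ k ∧ k ≤ n ∧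
      r = (dist (x 0) (x n) - dist (x n) (x k)) / k} : ℝ) : EReal)) atTop) K')
  apply le_limsup_of_frequently_le'
  rw [frequently_atTop]
  intro N
  obtain ⟨n, hnN, hn⟩ := hK (max N K')
  refine ⟨n, le_trans (le_max_left _ _) hnN, ?_⟩
  rw [EReal.coe_le_coe_iff]
  have hne : Set.Nonempty {r : ℝ | ∃ k : ℕ, K' ≤ k ∧ k ≤ n ∧
      r = (dist (x 0) (x n) - dist (x n) (x k)) / k} :=
    ⟨(dist (x 0) (x n) - dist (x n) (x K')) / K',
      ⟨K', le_rfl, le_trans (le_max_right _ _) hnN, rfl⟩⟩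
  apply le_csInf hne
  rintro r ⟨k, hk1, hk2, rfl⟩
  have hkK : K ≤ k := le_trans (le_trans (le_max_left _ _) (le_max_left _ _)) hk1
  have hkK₂ : K₂ ≤ k := le_trans (le_trans (le_max_right _ _) (le_max_left _ _)) hk1
  have hk1' : 1 ≤ k := le_trans (le_max_right _ _) hk1
  have hkpos : (0 : ℝ) < (k : ℝ) := by exact_mod_cast hk1'
  have h1 := hn k hkK hk2
  rw [hexp] at h1
  have h2 := hK₂ k hkK₂
  rw [le_div_iff₀ hkpos] at h2
  rw [le_div_iff₀ hkpos]
  have hdc : dist (x n) (x k) = dist (x k) (x n) := dist_comm _ _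
  have hcm : 0 < c / m := by positivity
  have h3 : c / m * (m * k) ≤ c / m * dist (x 0) (x k) :=
    mul_le_mul_of_nonneg_left h2 (le_of_lt hcm)
  have h4 : c / m * (m * k) = c * k := by field_simp
  linarith

theorem stmt3 {X : Type*} [MetricSpace X] (x : ℕ → X) (R : ℝ)
    (hR : 0 < R)
    (hrate : Tendsto (fun n : ℕ => dist (x 0) (x n) / n) atTop (nhds R)) :
    Aligned x ↔ (R : EReal) ≤ Lval x := by
  constructor
  · intro hA
    by_contra hlt
    push_neg at hlt
    obtain ⟨c, hc1, hc2⟩ := EReal.exists_between_coe_real hlt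
    have hc2' : c < R := by exact_mod_cast hc2
    set c₂ := max c (R / 2) with hc₂
    have hc₂R : c₂ < R := max_lt hc2' (by linarith)
    have hc₂0 : 0 < c₂ := lt_of_lt_of_le (by linarith) (le_max_right _ _)
    have key : (c₂ : EReal) ≤ Lval x := aux_forward x R c₂ hrate hc₂0 hc₂R hA
    have hcc₂ : (c : EReal) ≤ (c₂ : EReal) := by
      exact_mod_cast le_max_left c (R / 2)
    exact absurd (hcc₂.trans key) (not_le.2 hc1)
  · intro hL ε hε
    set e := Real.exp (-ε) with he
    have he1 : e < 1 := Real.exp_lt_one_iff.mpr (by linarith)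
    have he0 : 0 < e := Real.exp_pos _
    set δ := R * (1 - e) / (1 + e) with hδ
    have hδ0 : 0 < δ := by
      apply div_pos (by nlinarith) (by linarith)
    have hkey : e * (R + δ) = R - δ := by
      rw [hδ]; field_simp; ring
    have hRδ : ((R - δ : ℝ) : EReal) < Lval x := by
      refine lt_of_lt_of_le ?_ hL
      exact_mod_cast (by linarith : R - δ < R)
    rw [Lval, lt_iSup_iff] at hRδ
    obtain ⟨K, hK⟩ := hRδ
    have hfreq := frequently_lt_of_lt_limsup (by isBoundedDefault) hK
    obtain ⟨K₂, hK₂⟩ := eventually_atTop.mp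
      (hrate.eventually_le_const (by linarith : R < R + δ))
    refine ⟨max (max K K₂) 1, fun N => ?_⟩
    obtain ⟨n, hfn, hn⟩ :=
      (hfreq.and_eventually (eventually_ge_atTop (max N (max (max K K₂) 1)))).exists
    refine ⟨n, le_trans (le_max_left _ _) hn, fun k hkK' hkn => ?_⟩
    have hkK : K ≤ k := le_trans (le_trans (le_max_left _ _) (le_max_left _ _)) hkK'
    have hkK₂ : K₂ ≤ k := le_trans (le_trans (le_max_right _ _) (le_max_left _ _)) hkK'
    have hk1 : 1 ≤ k := le_trans (le_max_right _ _) hkK'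
    have hkpos : (0 : ℝ) < (k : ℝ) := by exact_mod_cast hk1
    have hmem : (dist (x 0) (x n) - dist (x n) (x k)) / (k : ℝ) ∈
        {r : ℝ | ∃ k : ℕ, K ≤ k ∧ k ≤ n ∧
          r = (dist (x 0) (x n) - dist (x n) (x k)) / k} := ⟨k, hkK, hkn, rfl⟩
    have h1 : R - δ < (dist (x 0) (x n) - dist (x n) (x k)) / (k : ℝ) := by
      have := EReal.coe_lt_coe_iff.mp hfn
      exact lt_of_lt_of_le this (csInf_le (bddBelow_set x K n) hmem)
    rw [lt_div_iff₀ hkpos] at h1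
    have h2 := hK₂ k hkK₂
    rw [div_le_iff₀ hkpos] at h2
    have hdc : dist (x n) (x k) = dist (x k) (x n) := dist_comm _ _
    nlinarith
end

section
/- Let (M,μ) be a probability space, f : M → M measure-preserving, X a metric space, and φ : M → X^ℕ measurable with a_x(m,n) = d(φ(x)_m, φ(x)_n) a stationary integrable subadditive process over f. Define L(x) = max(0, lim_{K→∞} limsup_{n→∞} min_{K≤k≤n} (d(φ(x)_0,φ(x)_n) - d(φ(x)_n,φ(x)_k))/k). Then L(x) ≤ L(f(x)) for μ-almost every x ∈ M, and hence L is μ-almost everywhere invariant. -/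
/-!
Stationarity and the triangle inequality give, with `u = φ x` and `v = φ (f x)`,
  `(d(u₀, u_{n+1}) - d(u_{n+1}, u_{k+1})) / (k+1)`
    `≤ d(u₀, u₁) / (k+1) + max 0 ((d(v₀, v_n) - d(v_n, v_k)) / k)`.
Hence the `K+1`-st limsup for `x` is at most `d(u₀, u₁) / (K+1)` plus the positive part of the
`K`-th one for `f x`; letting `K → ∞` gives `L x ≤ L (f x)` at every point.
For a measurable `g` with `g ≤ g ∘ f`, each sublevel set `{g < q}` contains its preimage
under `f` and has the same finite measure, so the two agree a.e.; as `q` runs over `ℚ` this forces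
`g = g ∘ f` a.e.
-/

open Filter MeasureTheory

/-- `L(x) = max(0, lim_{K→∞} limsup_{n→∞} min_{K≤k≤n} (d(φ(x)_0,φ(x)_n) - d(φ(x)_n,φ(x)_k))/k)`,
the limit over `K` being the supremum since the inner expression is nondecreasing in `K`. -/
noncomputable def Lfun {M X : Type*} [MetricSpace X] (φ : M → ℕ → X) (x : M) : EReal :=
  max 0 (⨆ K : ℕ, Filter.limsup
    (fun n : ℕ => ((sInf {r : ℝ | ∃ k : ℕ, K ≤ k ∧ k ≤ n ∧
      r = (dist (φ x 0) (φ x n) - dist (φ x n) (φ x k)) / k} : ℝ) : EReal)) Filter.atTop)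

open Topology

section EscapeRate

variable {X : Type*} [PseudoMetricSpace X] (u v : ℕ → X)

noncomputable def escapeRatio (n k : ℕ) : ℝ :=
  (dist (u 0) (u n) - dist (u n) (u k)) / k

noncomputable def minEscapeRatio (K n : ℕ) : ℝ :=
  sInf {r : ℝ | ∃ k : ℕ, K ≤ k ∧ k ≤ n ∧ r = escapeRatio u n k}

noncomputable def limsupMinEscapeRatio (K : ℕ) : EReal :=
  limsup (fun n => (minEscapeRatio u K n : EReal)) atTop

noncomputable def escapeRate : EReal :=
  max 0 (⨆ K, limsupMinEscapeRatio u K)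

variable {u}

lemma minEscapeRatio_eq_inf' {K n : ℕ} (h : K ≤ n) :
    minEscapeRatio u K n = (Finset.Icc K n).inf' (Finset.nonempty_Icc.2 h) (escapeRatio u n) := by
  rw [Finset.inf'_eq_csInf_image, minEscapeRatio]
  congr 1
  ext r
  simp [eq_comm, and_assoc]

lemma minEscapeRatio_of_lt {K n : ℕ} (h : n < K) : minEscapeRatio u K n = 0 := by
  have : {r : ℝ | ∃ k : ℕ, K ≤ k ∧ k ≤ n ∧ r = escapeRatio u n k} = ∅ :=
    Set.eq_empty_of_forall_notMem fun _ ⟨_, hKk, hkn, _⟩ => by omega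
  rw [minEscapeRatio, this, Real.sInf_empty]

lemma minEscapeRatio_le {K n k : ℕ} (hKk : K ≤ k) (hkn : k ≤ n) :
    minEscapeRatio u K n ≤ escapeRatio u n k := by
  rw [minEscapeRatio_eq_inf' (hKk.trans hkn)]
  exact Finset.inf'_le _ (Finset.mem_Icc.2 ⟨hKk, hkn⟩)

lemma exists_minEscapeRatio_eq {K n : ℕ} (h : K ≤ n) :
    ∃ k, K ≤ k ∧ k ≤ n ∧ minEscapeRatio u K n = escapeRatio u n k := by
  obtain ⟨k, hk, hmin⟩ := Finset.exists_mem_eq_inf' (Finset.nonempty_Icc.2 h) (escapeRatio u n)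
  rw [Finset.mem_Icc] at hk
  exact ⟨k, hk.1, hk.2, by rw [minEscapeRatio_eq_inf' h, hmin]⟩

lemma minEscapeRatio_mono {K K' n : ℕ} (hK : K ≤ K') (hK' : K' ≤ n) :
    minEscapeRatio u K n ≤ minEscapeRatio u K' n := by
  obtain ⟨k, hKk, hkn, hk⟩ := exists_minEscapeRatio_eq (u := u) hK'
  exact hk ▸ minEscapeRatio_le (hK.trans hKk) hkn

lemma monotone_limsupMinEscapeRatio : Monotone (limsupMinEscapeRatio u) := fun K K' hK =>
  limsup_le_limsup <| (eventually_ge_atTop K').mono fun _ hn =>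
    EReal.coe_le_coe_iff.2 (minEscapeRatio_mono hK hn)

section Shift

variable (hshift : ∀ m n, dist (v m) (v n) = dist (u (m + 1)) (u (n + 1)))
include hshift

lemma escapeRatio_succ_le (n k : ℕ) :
    escapeRatio u (n + 1) (k + 1) ≤
      dist (u 0) (u 1) / (k + 1) + max (escapeRatio v n k) 0 := by
  set a := dist (v 0) (v n) - dist (v n) (v k)
  have hnum : dist (u 0) (u (n + 1)) - dist (u (n + 1)) (u (k + 1)) ≤ dist (u 0) (u 1) + a := by
    have := dist_triangle (u 0) (u 1) (u (n + 1))
    simp only [a, hshift]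
    linarith
  have ha : a / (k + 1) ≤ max (a / k) 0 := by
    -- at `k = 0` the junk value `escapeRatio v n 0 = a / 0 = 0` is harmless, as then `a = 0`
    rcases k.eq_zero_or_pos with rfl | hk
    · simp [a, dist_comm]
    rcases le_or_gt 0 a with ha | ha
    · exact (div_le_div_of_nonneg_left ha (by positivity) (by linarith)).trans (le_max_left _ _)
    · exact (div_nonpos_of_nonpos_of_nonneg ha.le (by positivity)).trans (le_max_right _ _)
  calc escapeRatio u (n + 1) (k + 1)
      ≤ (dist (u 0) (u 1) + a) / (k + 1) := by
        rw [escapeRatio]; push_cast; gcongr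
    _ ≤ dist (u 0) (u 1) / (k + 1) + max (escapeRatio v n k) 0 := by
        rw [add_div]; exact add_le_add_right ha _

lemma minEscapeRatio_succ_le {K n : ℕ} (h : K ≤ n) :
    minEscapeRatio u (K + 1) (n + 1) ≤
      dist (u 0) (u 1) / (K + 1) + max (minEscapeRatio v K n) 0 := by
  obtain ⟨k, hKk, hkn, hk⟩ := exists_minEscapeRatio_eq (u := v) h
  calc minEscapeRatio u (K + 1) (n + 1)
      ≤ escapeRatio u (n + 1) (k + 1) := minEscapeRatio_le (by omega) (by omega)
    _ ≤ dist (u 0) (u 1) / (k + 1) + max (escapeRatio v n k) 0 :=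
        escapeRatio_succ_le v hshift n k
    _ ≤ dist (u 0) (u 1) / (K + 1) + max (minEscapeRatio v K n) 0 := by
        rw [hk]; gcongr

lemma limsupMinEscapeRatio_succ_le (K : ℕ) :
    limsupMinEscapeRatio u (K + 1) ≤
      ((dist (u 0) (u 1) / (K + 1) : ℝ) : EReal) + max (limsupMinEscapeRatio v K) 0 := by
  set c : EReal := ((dist (u 0) (u 1) / (K + 1) : ℝ) : EReal)
  have hcont (y : EReal) : ContinuousAt (fun y => c + max y 0) y :=
    (EReal.continuousAt_add (.inl (EReal.coe_ne_top _)) (.inl (EReal.coe_ne_bot _))).comp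
      (continuousAt_const.prodMk (continuous_id.max continuous_const).continuousAt)
  calc limsupMinEscapeRatio u (K + 1)
      = limsup (fun n => (minEscapeRatio u (K + 1) (n + 1) : EReal)) atTop :=
        (limsup_nat_add _ 1).symm
    _ ≤ limsup (fun n => c + max (minEscapeRatio v K n : EReal) 0) atTop :=
        limsup_le_limsup <| (eventually_ge_atTop K).mono fun n hn =>
          (EReal.coe_le_coe_iff.2 (minEscapeRatio_succ_le v hshift hn)).trans_eq <| by
            rw [EReal.coe_add, (EReal.coe_strictMono.monotone).map_max, EReal.coe_zero]
    _ = c + max (limsupMinEscapeRatio v K) 0 :=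
        ((monotone_id.max monotone_const).const_add c |>.map_limsup_of_continuousAt _
          (hcont _)).symm

theorem escapeRate_le_of_dist_succ : escapeRate u ≤ escapeRate v := by
  set c := dist (u 0) (u 1)
  have hv (K : ℕ) : max (limsupMinEscapeRatio v K) 0 ≤ escapeRate v :=
    max_le ((le_iSup _ K).trans (le_max_right _ _)) (le_max_left _ _)
  have hc : Tendsto (fun K : ℕ => ((c / (K + 1) : ℝ) : EReal)) atTop (𝓝 0) := by
    have := (tendsto_const_div_atTop_nhds_zero_nat c).comp (tendsto_add_atTop_nat 1)
    simpa [Function.comp_def] using (continuous_coe_real_ereal.tendsto 0).comp this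
  have hlim : Tendsto (fun K : ℕ => ((c / (K + 1) : ℝ) : EReal) + escapeRate v) atTop
      (𝓝 (escapeRate v)) := by
    have hadd := EReal.continuousAt_add (p := (0, escapeRate v)) (.inl EReal.zero_ne_top)
      (.inl EReal.zero_ne_bot)
    simpa [Function.comp_def] using hadd.tendsto.comp (hc.prodMk_nhds tendsto_const_nhds)
  refine max_le (le_max_left _ _) (iSup_le fun K => ge_of_tendsto hlim ?_)
  filter_upwards [eventually_ge_atTop K] with K' hK'
  calc limsupMinEscapeRatio u K
      ≤ limsupMinEscapeRatio u (K' + 1) := monotone_limsupMinEscapeRatio (by omega)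
    _ ≤ ((c / (K' + 1) : ℝ) : EReal) + max (limsupMinEscapeRatio v K') 0 :=
        limsupMinEscapeRatio_succ_le v hshift K'
    _ ≤ ((c / (K' + 1) : ℝ) : EReal) + escapeRate v := add_le_add_right (hv K') _

end Shift

end EscapeRate

lemma Lfun_eq_escapeRate {M X : Type*} [MetricSpace X] (φ : M → ℕ → X) (x : M) :
    Lfun φ x = escapeRate (φ x) :=
  rfl

section Measurability

variable {M X : Type*} [MeasurableSpace M] [PseudoMetricSpace X] {φ : M → ℕ → X}
  (hφ : ∀ m n, Measurable fun x => dist (φ x m) (φ x n))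
include hφ

lemma measurable_minEscapeRatio (K n : ℕ) : Measurable fun x => minEscapeRatio (φ x) K n := by
  rcases le_or_gt K n with h | h
  · have : (fun x => minEscapeRatio (φ x) K n) =
        (Finset.Icc K n).inf' (Finset.nonempty_Icc.2 h) fun k x => escapeRatio (φ x) n k := by
      ext x
      rw [minEscapeRatio_eq_inf' h, Finset.inf'_apply]
    rw [this]
    exact Finset.inf'_induction _ _ (fun _ h₁ _ h₂ => h₁.inf h₂) fun k _ =>
      ((hφ 0 n).sub (hφ n k)).div_const _
  · simp_rw [minEscapeRatio_of_lt h]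
    exact measurable_const

lemma measurable_escapeRate : Measurable fun x => escapeRate (φ x) :=
  measurable_const.max <| .iSup fun K => .limsup fun n =>
    measurable_coe_real_ereal.comp (measurable_minEscapeRatio hφ K n)

end Measurability

theorem MeasureTheory.MeasurePreserving.ae_eq_comp_of_ae_le_comp {M : Type*} [MeasurableSpace M]
    {μ : Measure M} [IsFiniteMeasure μ] {f : M → M} (hf : MeasurePreserving f μ μ)
    {g : M → EReal} (hg : Measurable g) (hle : ∀ᵐ x ∂μ, g x ≤ g (f x)) :
    ∀ᵐ x ∂μ, g x = g (f x) := by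
  have hsub (q : ℚ) :
      f ⁻¹' {y | g y < ((q : ℝ) : EReal)} =ᵐ[μ] {y | g y < ((q : ℝ) : EReal)} := by
    have hA : MeasurableSet {y | g y < ((q : ℝ) : EReal)} :=
      measurableSet_lt hg measurable_const
    refine ae_eq_of_ae_subset_of_measure_ge ?_ (hf.measure_preimage hA.nullMeasurableSet).ge
      (hA.preimage hf.measurable).nullMeasurableSet (measure_ne_top _ _)
    filter_upwards [hle] with x hx h using hx.trans_lt h
  filter_upwards [hle, ae_all_iff.2 hsub] with x hx hq
  refine hx.antisymm (not_lt.1 fun hlt => ?_)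
  obtain ⟨q, hxq, hqf⟩ := EReal.exists_rat_btwn_of_lt hlt
  exact lt_asymm hqf (cast (hq q).symm hxq)

theorem stmt6_general {M : Type*} [MeasurableSpace M] (μ : Measure M) [IsProbabilityMeasure μ]
    (f : M → M) (hf : MeasurePreserving f μ μ)
    {X : Type*} [MetricSpace X] (φ : M → ℕ → X)
    (hmeas : ∀ m n : ℕ, Measurable fun x => dist (φ x m) (φ x n))
    (hstat : ∀ x : M, ∀ m n : ℕ,
      dist (φ (f x) m) (φ (f x) n) = dist (φ x (m + 1)) (φ x (n + 1))) :
    (∀ᵐ x ∂μ, Lfun φ x ≤ Lfun φ (f x)) ∧ (∀ᵐ x ∂μ, Lfun φ x = Lfun φ (f x)) := by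
  simp only [Lfun_eq_escapeRate]
  have hle : ∀ᵐ x ∂μ, escapeRate (φ x) ≤ escapeRate (φ (f x)) :=
    .of_forall fun x => escapeRate_le_of_dist_succ (φ (f x)) (hstat x)
  exact ⟨hle, hf.ae_eq_comp_of_ae_le_comp (measurable_escapeRate hmeas) hle⟩

theorem stmt6 {M : Type*} [MeasurableSpace M] (μ : Measure M) [IsProbabilityMeasure μ]
    (f : M → M) (hf : MeasurePreserving f μ μ)
    {X : Type*} [MetricSpace X] (φ : M → ℕ → X)
    (hmeas : ∀ m n : ℕ, Measurable fun x => dist (φ x m) (φ x n))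
    (hstat : ∀ x : M, ∀ m n : ℕ,
      dist (φ (f x) m) (φ (f x) n) = dist (φ x (m + 1)) (φ x (n + 1)))
    (hint : Integrable (fun x => dist (φ x 0) (φ x 1)) μ) :
    (∀ᵐ x ∂μ, Lfun φ x ≤ Lfun φ (f x)) ∧ (∀ᵐ x ∂μ, Lfun φ x = Lfun φ (f x)) :=
  stmt6_general μ f hf φ hmeas hstat
end

section
/- Let F : ℝ² → ℝ² be given by F(x,y) = (x+1, y), and equip ℝ² with the Riemannian metric ds² = (1+e^{-y})² dx² + dy². Then the orbit x_n = F^n(0,0) = (n, 0) has rate of escape exactly 1 with respect to the distance d of this metric: lim_{n→∞} d((0,0),(n,0))/n = 1. Specifically, n ≤ d((0,0),(n,0)) ≤ n + 2 log n + 1 for all n ≥ 1. -/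
/-!
Since `(1 + e^{-y})² ≥ 1`, the speed of a path dominates `|x'|`, so every path from `(0,0)` to
`(a,0)` is at least `a` long. Conversely the path that climbs to height `log a`, crosses there,
where the horizontal factor is `1 + 1/a`, and comes back down has length `a + 2 log a + 1`;
its corners are made `C¹` by running each leg through `Real.smoothTransition`, whose derivative
vanishes outside `[0, 1]`.
-/

open Filter

/-- The Riemannian distance of the metric `ds² = (1+e^{-y})² dx² + dy²` on `ℝ²`,
defined as the infimum of lengths of `C¹` paths. -/
noncomputable def riemDist (p q : ℝ × ℝ) : ℝ :=
  sInf {l : ℝ | ∃ γ : ℝ → ℝ × ℝ, ContDiff ℝ 1 γ ∧ γ 0 = p ∧ γ 1 = q ∧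
    l = ∫ t in (0:ℝ)..1, Real.sqrt ((1 + Real.exp (-(γ t).2)) ^ 2 *
      (deriv (fun s => (γ s).1) t) ^ 2 + (deriv (fun s => (γ s).2) t) ^ 2)}

open Real Topology

namespace RiemDist

noncomputable def speed (γ : ℝ → ℝ × ℝ) (t : ℝ) : ℝ :=
  √((1 + exp (-(γ t).2)) ^ 2 * (deriv (fun s => (γ s).1) t) ^ 2 +
    (deriv (fun s => (γ s).2) t) ^ 2)

noncomputable def pathLength (γ : ℝ → ℝ × ℝ) : ℝ :=
  ∫ t in (0:ℝ)..1, speed γ t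

theorem pathLength_nonneg (γ : ℝ → ℝ × ℝ) : 0 ≤ pathLength γ :=
  intervalIntegral.integral_nonneg zero_le_one fun _ _ => sqrt_nonneg _

theorem continuous_speed {γ : ℝ → ℝ × ℝ} (hγ : ContDiff ℝ 1 γ) : Continuous (speed γ) := by
  have hx : Continuous (deriv fun s => (γ s).1) :=
    (contDiff_fst.comp hγ).continuous_deriv le_rfl
  have hy : Continuous (deriv fun s => (γ s).2) :=
    (contDiff_snd.comp hγ).continuous_deriv le_rfl
  have := hγ.continuous
  unfold speed
  fun_prop

theorem deriv_fst_le_speed (γ : ℝ → ℝ × ℝ) (t : ℝ) :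
    deriv (fun s => (γ s).1) t ≤ speed γ t := by
  set x' := deriv (fun s => (γ s).1) t
  have hx' : x' ^ 2 ≤ (1 + exp (-(γ t).2)) ^ 2 * x' ^ 2 + (deriv (fun s => (γ s).2) t) ^ 2 := by
    have : 1 ≤ (1 + exp (-(γ t).2)) ^ 2 := one_le_pow₀ (by linarith [exp_pos (-(γ t).2)])
    nlinarith [sq_nonneg x', sq_nonneg (deriv (fun s => (γ s).2) t)]
  calc x' ≤ |x'| := le_abs_self x'
    _ = √(x' ^ 2) := (sqrt_sq_eq_abs x').symm
    _ ≤ speed γ t := sqrt_le_sqrt hx'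

theorem fst_sub_le_pathLength {γ : ℝ → ℝ × ℝ} (hγ : ContDiff ℝ 1 γ) :
    (γ 1).1 - (γ 0).1 ≤ pathLength γ := by
  have hx : ContDiff ℝ 1 fun s => (γ s).1 := contDiff_fst.comp hγ
  have hx' : Continuous (deriv fun s => (γ s).1) := hx.continuous_deriv le_rfl
  calc (γ 1).1 - (γ 0).1 = ∫ t in (0:ℝ)..1, deriv (fun s => (γ s).1) t :=
        (intervalIntegral.integral_deriv_eq_sub (fun t _ => (hx.differentiable one_ne_zero) t)
          (hx'.intervalIntegrable 0 1)).symm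
    _ ≤ pathLength γ :=
        intervalIntegral.integral_mono_on zero_le_one (hx'.intervalIntegrable 0 1)
          ((continuous_speed hγ).intervalIntegrable 0 1) fun t _ => deriv_fst_le_speed γ t

theorem riemDist_le_pathLength {γ : ℝ → ℝ × ℝ} (hγ : ContDiff ℝ 1 γ) {p q : ℝ × ℝ}
    (h0 : γ 0 = p) (h1 : γ 1 = q) : riemDist p q ≤ pathLength γ :=
  csInf_le ⟨0, by rintro _ ⟨γ, -, -, -, rfl⟩; exact pathLength_nonneg γ⟩ ⟨γ, hγ, h0, h1, rfl⟩

theorem fst_sub_le_riemDist (p q : ℝ × ℝ) : q.1 - p.1 ≤ riemDist p q := by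
  have segment : ContDiff ℝ 1 fun t : ℝ => p + t • (q - p) := by fun_prop
  refine le_csInf ⟨_, _, segment, by simp, by simp, rfl⟩ ?_
  rintro _ ⟨γ, hγ, rfl, rfl, rfl⟩
  exact fst_sub_le_pathLength hγ

noncomputable def stage (k t : ℝ) : ℝ := smoothTransition (3 * t - k)

section Stage

variable (k : ℝ) {t : ℝ}

theorem contDiff_stage {n : ℕ∞} : ContDiff ℝ n (stage k) := by
  unfold stage; fun_prop

theorem stage_of_le (h : t ≤ k / 3) : stage k t = 0 :=
  smoothTransition.zero_of_nonpos (by linarith)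

theorem stage_of_ge (h : (k + 1) / 3 ≤ t) : stage k t = 1 :=
  smoothTransition.one_of_one_le (by linarith)

theorem hasDerivAt_stage (t : ℝ) : HasDerivAt (stage k) (deriv (stage k) t) t :=
  ((contDiff_stage k (n := 1)).differentiable one_ne_zero t).hasDerivAt

theorem deriv_stage_nonneg (t : ℝ) : 0 ≤ deriv (stage k) t :=
  Monotone.deriv_nonneg fun _ _ h => smoothTransition.monotone (by linarith)

theorem deriv_stage_of_le (h : t ≤ k / 3) : deriv (stage k) t = 0 :=
  IsLocalMin.deriv_eq_zero <| .of_forall fun _ => by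
    rw [stage_of_le k h]; exact smoothTransition.nonneg _

theorem deriv_stage_of_ge (h : (k + 1) / 3 ≤ t) : deriv (stage k) t = 0 :=
  IsLocalMax.deriv_eq_zero <| .of_forall fun _ => by
    rw [stage_of_ge k h]; exact smoothTransition.le_one _

end Stage

/-- Up by `b`, across by `a`, down by `b`; leg `k` is run during `[k/3, (k+1)/3]` and stops at
its ends, which makes the polygonal path `C¹`. -/
noncomputable def detour (a b t : ℝ) : ℝ × ℝ := (a * stage 1 t, b * (stage 0 t - stage 2 t))

section Detour

variable (a b : ℝ)

theorem contDiff_detour : ContDiff ℝ 1 (detour a b) := by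
  have := contDiff_stage (n := 1)
  unfold detour; fun_prop

theorem detour_zero : detour a b 0 = (0, 0) := by
  norm_num [detour, stage_of_le (t := 0)]

theorem detour_one : detour a b 1 = (a, 0) := by
  norm_num [detour, stage_of_ge (t := 1)]

theorem deriv_detour_fst (t : ℝ) :
    deriv (fun s => (detour a b s).1) t = a * deriv (stage 1) t :=
  ((hasDerivAt_stage 1 t).const_mul a).deriv

theorem deriv_detour_snd (t : ℝ) :
    deriv (fun s => (detour a b s).2) t = b * (deriv (stage 0) t - deriv (stage 2) t) :=
  (((hasDerivAt_stage 0 t).sub (hasDerivAt_stage 2 t)).const_mul b).deriv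

variable {a b}

theorem speed_detour (ha : 0 ≤ a) (hb : 0 ≤ b) (t : ℝ) :
    speed (detour a b) t = b * deriv (stage 0) t + a * (1 + exp (-b)) * deriv (stage 1) t +
      b * deriv (stage 2) t := by
  have hnonneg : 0 ≤ b * deriv (stage 0) t + a * (1 + exp (-b)) * deriv (stage 1) t +
      b * deriv (stage 2) t :=
    add_nonneg (add_nonneg (mul_nonneg hb (deriv_stage_nonneg 0 t))
      (mul_nonneg (by positivity) (deriv_stage_nonneg 1 t)))
      (mul_nonneg hb (deriv_stage_nonneg 2 t))
  rw [speed, deriv_detour_fst, deriv_detour_snd, sqrt_eq_iff_mul_self_eq (by positivity) hnonneg]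
  -- At any time only one leg moves, and the horizontal one does so at height `b`.
  rcases le_or_gt t (1 / 3) with h₁ | h₁
  · rw [deriv_stage_of_le 1 (by linarith), deriv_stage_of_le 2 (by linarith)]
    ring
  rcases le_or_gt t (2 / 3) with h₂ | h₂
  · rw [deriv_stage_of_ge 0 (by linarith), deriv_stage_of_le 2 (by linarith), detour,
      stage_of_ge 0 (by linarith), stage_of_le 2 (by linarith)]
    ring_nf
  · rw [deriv_stage_of_ge 0 (by linarith), deriv_stage_of_ge 1 (by linarith)]
    ring

theorem pathLength_detour (ha : 0 ≤ a) (hb : 0 ≤ b) :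
    pathLength (detour a b) = a * (1 + exp (-b)) + 2 * b := by
  let G t := b * stage 0 t + a * (1 + exp (-b)) * stage 1 t + b * stage 2 t
  have hG (t : ℝ) : HasDerivAt G (speed (detour a b) t) t := by
    rw [speed_detour ha hb]
    exact (((hasDerivAt_stage 0 t).const_mul b).add ((hasDerivAt_stage 1 t).const_mul _)).add
      ((hasDerivAt_stage 2 t).const_mul b)
  rw [pathLength, intervalIntegral.integral_eq_sub_of_hasDerivAt (fun t _ => hG t)
    ((continuous_speed (contDiff_detour a b)).intervalIntegrable 0 1)]
  norm_num [G, stage_of_le (t := 0), stage_of_ge (t := 1)]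
  ring

end Detour

theorem riemDist_le_add_two_mul_log {a : ℝ} (ha : 1 ≤ a) :
    riemDist (0, 0) (a, 0) ≤ a + 2 * log a + 1 := by
  have ha₀ : 0 < a := by linarith
  calc riemDist (0, 0) (a, 0) ≤ pathLength (detour a (log a)) :=
        riemDist_le_pathLength (contDiff_detour _ _) (detour_zero _ _) (detour_one _ _)
    _ = a * (1 + exp (-log a)) + 2 * log a := pathLength_detour ha₀.le (log_nonneg ha)
    _ = a + 2 * log a + 1 := by
        rw [exp_neg, exp_log ha₀, mul_add, mul_inv_cancel₀ ha₀.ne']; ring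

theorem le_riemDist (a : ℝ) : a ≤ riemDist (0, 0) (a, 0) := by
  simpa using fst_sub_le_riemDist (0, 0) (a, 0)

end RiemDist

theorem tendsto_div_natCast_of_le_of_le_add_log {f : ℕ → ℝ} (C D : ℝ)
    (hlow : ∀ᶠ n : ℕ in atTop, (n : ℝ) ≤ f n)
    (hup : ∀ᶠ n : ℕ in atTop, f n ≤ n + C * log n + D) :
    Tendsto (fun n : ℕ => f n / n) atTop (𝓝 1) := by
  have hlim : Tendsto (fun n : ℕ => 1 + C * (log n / n) + D / n) atTop (𝓝 1) := by
    have hlog := isLittleO_log_id_atTop.tendsto_div_nhds_zero.comp tendsto_natCast_atTop_atTop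
    simpa using ((hlog.const_mul C).const_add 1).add (tendsto_const_div_atTop_nhds_zero_nat D)
  refine tendsto_of_tendsto_of_tendsto_of_le_of_le' tendsto_const_nhds hlim ?_ ?_
  · filter_upwards [hlow, eventually_gt_atTop 0] with n h hn
    rw [le_div_iff₀ (by positivity)]
    linarith
  · filter_upwards [hup, eventually_gt_atTop 0] with n h hn
    calc f n / n ≤ (n + C * log n + D) / n := by gcongr
      _ = 1 + C * (log n / n) + D / n := by field_simp

/-- The orbit `x_n = Fⁿ(0,0) = (n,0)` of `F(x,y) = (x+1,y)` has rate of escape exactly 1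
for the metric `ds² = (1+e^{-y})² dx² + dy²`; in fact
`n ≤ d((0,0),(n,0)) ≤ n + 2 log n + 1` for `n ≥ 1`. -/
theorem stmt14 :
    Tendsto (fun n : ℕ => riemDist (0, 0) (n, 0) / n) atTop (nhds 1) ∧
    ∀ n : ℕ, 1 ≤ n → (n : ℝ) ≤ riemDist (0, 0) (n, 0) ∧
      riemDist (0, 0) (n, 0) ≤ n + 2 * Real.log n + 1 := by
  have hup (n : ℕ) (hn : 1 ≤ n) : riemDist (0, 0) (n, 0) ≤ n + 2 * Real.log n + 1 :=
    RiemDist.riemDist_le_add_two_mul_log (by exact_mod_cast hn)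
  refine ⟨?_, fun n hn => ⟨RiemDist.le_riemDist n, hup n hn⟩⟩
  exact tendsto_div_natCast_of_le_of_le_add_log 2 1 (.of_forall fun n => RiemDist.le_riemDist n)
    (eventually_ge_atTop 1 |>.mono hup)
end

section
/- Let ℂ have the Euclidean metric and define x_n = n e^{i log n} for n ≥ 1 (x_0 = 0). Then |x_{n+1} - x_n| is bounded (in particular o(n)) and |x_n| = n, so the sequence escapes linearly to infinity with rate of escape 1, but the sequence is not escorted by any geodesic: there is no ray α(t) = t u (|u| = 1) with |x_n - α(|x_n|)| = o(n). -/
/-!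
Since `|e^{i log n}| = 1` we have `|x_n| = n`, and `log (n+1) - log n ≤ 1/n` keeps the steps
bounded. A geodesic ray `t ↦ t u` escorting `x_n` would force `e^{i log n} → u`. Passing to the
subsequence `2n` multiplies `e^{i log n}` by `e^{i log 2}`, so the limit would satisfy
`e^{i log 2} u = u` with `|u| = 1`; but `0 < log 2 < 2π`.
-/

open Filter

/-- The sequence `x_n = n e^{i log n}` in `ℂ` (with `x_0 = 0`). -/
noncomputable def xseq (n : ℕ) : ℂ :=
  (n : ℂ) * Complex.exp (Complex.I * Real.log n)

open Complex Topology

lemma norm_xseq (n : ℕ) : ‖xseq n‖ = n := by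
  rw [xseq, norm_mul, norm_exp_I_mul_ofReal, norm_natCast, mul_one]

lemma norm_exp_I_mul_ofReal_sub_exp_I_mul_ofReal_le (a b : ℝ) :
    ‖exp (I * b) - exp (I * a)‖ ≤ |b - a| := by
  have hfactor : exp (I * b) - exp (I * a) = exp (I * a) * (exp (I * ↑(b - a)) - 1) := by
    rw [mul_sub, ← exp_add]
    push_cast
    ring_nf
  rw [hfactor, norm_mul, norm_exp_I_mul_ofReal, one_mul]
  exact Real.norm_exp_I_mul_ofReal_sub_one_le

lemma Real.log_add_one_sub_log_le {x : ℝ} (hx : 0 < x) :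
    Real.log (x + 1) - Real.log x ≤ 1 / x := by
  rw [← Real.log_div (by positivity) hx.ne']
  calc Real.log ((x + 1) / x) ≤ (x + 1) / x - 1 := Real.log_le_sub_one_of_pos (by positivity)
    _ = 1 / x := by field_simp; ring

lemma norm_xseq_succ_sub_le (n : ℕ) : ‖xseq (n + 1) - xseq n‖ ≤ 3 := by
  rcases n.eq_zero_or_pos with rfl | hn
  · norm_num [xseq]
  have hn' : (1 : ℝ) ≤ n := by exact_mod_cast hn
  have hsplit : xseq (n + 1) - xseq n =
      ((n : ℂ) + 1) * (exp (I * Real.log (n + 1)) - exp (I * Real.log n)) +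
        exp (I * Real.log n) := by
    simp only [xseq]
    push_cast
    ring
  have hlog : |Real.log (n + 1) - Real.log n| ≤ 1 / n := by
    rw [abs_of_nonneg (sub_nonneg.2 (Real.log_le_log (by positivity) (by linarith)))]
    exact Real.log_add_one_sub_log_le (by positivity)
  calc ‖xseq (n + 1) - xseq n‖ ≤ (n + 1) * (1 / n) + 1 := by
        rw [hsplit]
        refine (norm_add_le _ _).trans ?_
        rw [norm_mul, norm_exp_I_mul_ofReal]
        gcongr
        · exact_mod_cast (norm_natCast (n + 1)).le
        · exact (norm_exp_I_mul_ofReal_sub_exp_I_mul_ofReal_le _ _).trans hlog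
    _ ≤ 3 := by
        rw [mul_one_div, add_div, div_self (by positivity)]
        linarith [(div_le_one (by positivity)).2 hn']

lemma exp_I_mul_log_two_ne_one : exp (I * Real.log 2) ≠ 1 := by
  intro h
  have hcos : Real.cos (Real.log 2) = 1 := by
    rw [← exp_ofReal_mul_I_re, mul_comm, h, one_re]
  have hlog2 : Real.log 2 < 2 * Real.pi := by
    linarith [Real.log_two_lt_d9, Real.pi_gt_three]
  refine (Real.log_pos one_lt_two).ne' ?_
  exact (Real.cos_eq_one_iff_of_lt_of_lt (by linarith [Real.log_pos one_lt_two]) hlog2).1 hcos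

lemma not_tendsto_exp_I_mul_log (u : ℂ) :
    ¬ Tendsto (fun n : ℕ => exp (I * Real.log n)) atTop (𝓝 u) := by
  intro h
  have hu : u ≠ 0 := by
    have hnorm : ‖u‖ = 1 := tendsto_nhds_unique h.norm (by
      simp only [norm_exp_I_mul_ofReal]
      exact tendsto_const_nhds)
    exact norm_ne_zero_iff.1 (hnorm ▸ one_ne_zero)
  have hdouble : Tendsto (fun n : ℕ => exp (I * Real.log ↑(2 * n))) atTop (𝓝 u) :=
    h.comp (tendsto_id.const_mul_atTop' two_pos)
  have hrot : Tendsto (fun n : ℕ => exp (I * Real.log ↑(2 * n))) atTop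
      (𝓝 (exp (I * Real.log 2) * u)) := by
    refine (h.const_mul _).congr' ?_
    filter_upwards [eventually_ne_atTop 0] with n hn
    rw [Nat.cast_mul, Real.log_mul (by norm_num) (by exact_mod_cast hn), ← exp_add]
    push_cast
    ring_nf
  have hfixed : exp (I * Real.log 2) * u = u := tendsto_nhds_unique hrot hdouble
  exact exp_I_mul_log_two_ne_one ((mul_eq_right₀ hu).1 hfixed)

lemma not_tendsto_norm_xseq_sub_mul_div (u : ℂ) :
    ¬ Tendsto (fun n : ℕ => ‖xseq n - (‖xseq n‖ : ℂ) * u‖ / n) atTop (𝓝 0) := by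
  intro h
  refine not_tendsto_exp_I_mul_log u (tendsto_iff_norm_sub_tendsto_zero.2 (h.congr' ?_))
  filter_upwards [eventually_ne_atTop 0] with n hn
  rw [norm_xseq, xseq, ofReal_natCast, ← mul_sub, norm_mul, norm_natCast,
    mul_div_cancel_left₀ _ (Nat.cast_ne_zero.2 hn)]

/-- The sequence `x_n = n e^{i log n}` has bounded steps and `|x_n| = n`, so it escapes
linearly to infinity with rate of escape 1, yet it is not escorted by any geodesic ray
`t ↦ t u` from the origin. -/
theorem stmt18 :
    (∃ C : ℝ, ∀ n : ℕ, ‖xseq (n + 1) - xseq n‖ ≤ C) ∧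
    (∀ n : ℕ, ‖xseq n‖ = n) ∧
    Tendsto (fun n : ℕ => ‖xseq n‖ / n) atTop (nhds 1) ∧
    ¬ ∃ u : ℂ, ‖u‖ = 1 ∧
      Tendsto (fun n : ℕ => ‖xseq n - (‖xseq n‖ : ℂ) * u‖ / n) atTop (nhds 0) := by
  refine ⟨⟨3, norm_xseq_succ_sub_le⟩, norm_xseq, ?_,
    fun ⟨u, _, h⟩ => not_tendsto_norm_xseq_sub_mul_div u h⟩
  refine tendsto_const_nhds.congr' ?_
  filter_upwards [eventually_ne_atTop 0] with n hn
  rw [norm_xseq, div_self (Nat.cast_ne_zero.2 hn)]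
end
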